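/- Let n ≥ 4 be even and ω = e^{4πi/n}. The vertical-tile states |V_{mk}⟩ = |k⟩ ⊗ Σ_{j=0}^{n/2−1} ω^{jm} |j+k+1 mod n⟩, horizontal-tile states |H_{mk}⟩ = (Σ_{j=0}^{n/2−1} ω^{jm} |j+k mod n⟩) ⊗ |k⟩ (for m = 1,...,n/2−1, k = 0,...,n−1), and the stopper |F⟩ = Σ_{i,j=0}^{n−1} |i⟩ ⊗ |j⟩ form a set of n² − 2n + 1 mutually orthogonal product vectors in ℂⁿ ⊗ ℂⁿ. -/

import Mathlib

open Finset

/-- ω = e^{4πi/n}. -/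
noncomputable def gt1ω (n : ℕ) : ℂ := Complex.exp (4 * Real.pi * Complex.I / n)

/-- Vertical tile state |V_{mk}⟩ = |k⟩ ⊗ Σ_{j<n/2} ω^{jm} |j+k+1 mod n⟩. -/
noncomputable def gt1V (n m k : ℕ) : EuclideanSpace ℂ (Fin n × Fin n) :=
  WithLp.toLp 2 fun p => (if (p.1 : ℕ) = k % n then 1 else 0) *
    ∑ j ∈ range (n / 2), if (p.2 : ℕ) = (j + k + 1) % n then gt1ω n ^ (j * m) else 0

/-- Horizontal tile state |H_{mk}⟩ = (Σ_{j<n/2} ω^{jm} |j+k mod n⟩) ⊗ |k⟩. -/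
noncomputable def gt1H (n m k : ℕ) : EuclideanSpace ℂ (Fin n × Fin n) :=
  WithLp.toLp 2 fun p => (∑ j ∈ range (n / 2), if (p.1 : ℕ) = (j + k) % n then gt1ω n ^ (j * m) else 0) *
    (if (p.2 : ℕ) = k % n then 1 else 0)

/-- The stopper |F⟩ = Σ_{i,j} |i⟩ ⊗ |j⟩. -/
noncomputable def gt1F (n : ℕ) : EuclideanSpace ℂ (Fin n × Fin n) := WithLp.toLp 2 fun _ => 1

/-- Index type for GenTiles1: vertical tiles (m = 1,…,n/2−1, k = 0,…,n−1),
horizontal tiles, and the stopper. -/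
abbrev GT1Index (n : ℕ) := (Fin (n / 2 - 1) × Fin n) ⊕ ((Fin (n / 2 - 1) × Fin n) ⊕ Unit)

/-- The GenTiles1 family in ℂⁿ ⊗ ℂⁿ. -/
noncomputable def gt1 (n : ℕ) : GT1Index n → EuclideanSpace ℂ (Fin n × Fin n)
  | Sum.inl (m, k) => gt1V n ((m : ℕ) + 1) (k : ℕ)
  | Sum.inr (Sum.inl (m, k)) => gt1H n ((m : ℕ) + 1) (k : ℕ)
  | Sum.inr (Sum.inr _) => gt1F n

open ComplexConjugate

/-! Each state is a product vector `u ⊗ v`, and `⟪u ⊗ v, u' ⊗ v'⟫ = ⟪u, u'⟫ ⟪v, v'⟫`, so it is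
enough that one pair of factors is orthogonal. Two tiles of the same orientation at different
positions `k ≠ k'` have orthogonal basis-vector factors; at the same position their Fourier factors
are orthogonal because `ω` is a primitive `n/2`-th root of unity. A vertical tile at `k` and a
horizontal tile at `k'` are orthogonal because `k` cannot lie in the window `k' + [0, n/2)` while
`k'` lies in `k + 1 + [0, n/2)`: that would give `n ∣ j + j' + 1` with `0 < j + j' + 1 < n`.
Every tile is orthogonal to the stopper since `∑_{j < n/2} ω^{jm} = 0` for `0 < m < n/2`. -/

section Tensor

variable {ι κ : Type*} [Fintype ι] [Fintype κ]

noncomputable def tensorVec (u : EuclideanSpace ℂ ι) (v : EuclideanSpace ℂ κ) :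
    EuclideanSpace ℂ (ι × κ) :=
  WithLp.toLp 2 fun p => u p.1 * v p.2

theorem inner_tensorVec_tensorVec (u u' : EuclideanSpace ℂ ι) (v v' : EuclideanSpace ℂ κ) :
    inner ℂ (tensorVec u v) (tensorVec u' v') = inner ℂ u u' * inner ℂ v v' := by
  simp only [tensorVec, PiLp.inner_apply, RCLike.inner_apply, sum_mul_sum, Fintype.sum_prod_type,
    map_mul]
  exact sum_congr rfl fun _ _ => sum_congr rfl fun _ _ => by ring

theorem tensorVec_ne_zero {u : EuclideanSpace ℂ ι} {v : EuclideanSpace ℂ κ} (hu : u ≠ 0)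
    (hv : v ≠ 0) : tensorVec u v ≠ 0 := by
  rw [← inner_self_ne_zero (𝕜 := ℂ), inner_tensorVec_tensorVec]
  exact mul_ne_zero (inner_self_ne_zero.2 hu) (inner_self_ne_zero.2 hv)

end Tensor

theorem geom_sum_eq_zero_of_pow_eq_one {K : Type*} [DivisionRing K] {x : K} {N : ℕ} (hx : x ≠ 1)
    (hxN : x ^ N = 1) : ∑ i ∈ range N, x ^ i = 0 := by
  rw [geom_sum_eq hx, hxN, sub_self, zero_div]

section RootOfUnity

variable {n : ℕ}

theorem gt1ω_eq_exp (hn : Even n) :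
    gt1ω n = Complex.exp (2 * Real.pi * Complex.I / ↑(n / 2)) := by
  obtain ⟨N, rfl⟩ := hn
  rw [gt1ω, ← two_mul, Nat.mul_div_cancel_left N two_pos]
  push_cast
  rcases eq_or_ne (N : ℂ) 0 with hN | hN
  · simp [hN]
  · congr 1; field_simp; ring

theorem isPrimitiveRoot_gt1ω (hn : Even n) (hn0 : n ≠ 0) : IsPrimitiveRoot (gt1ω n) (n / 2) := by
  rw [gt1ω_eq_exp hn]
  exact Complex.isPrimitiveRoot_exp _ (by obtain ⟨N, rfl⟩ := hn; omega)

theorem conj_gt1ω_pow_mul_gt1ω_pow (hn : Even n) (hn0 : n ≠ 0) (a b : ℕ) :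
    conj (gt1ω n ^ a) * gt1ω n ^ b = gt1ω n ^ ((b : ℤ) - a) := by
  have hω := isPrimitiveRoot_gt1ω hn hn0
  have hN : n / 2 ≠ 0 := by obtain ⟨N, rfl⟩ := hn; omega
  have h0 : gt1ω n ≠ 0 := hω.ne_zero hN
  rw [map_pow, ← Complex.inv_eq_conj (hω.norm'_eq_one hN), zpow_sub₀ h0, zpow_natCast,
    zpow_natCast, inv_pow, div_eq_mul_inv, mul_comm]

theorem sum_conj_gt1ω_pow_mul_gt1ω_pow (hn : Even n) {m m' : ℕ} (hm : m < n / 2)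
    (hm' : m' < n / 2) :
    ∑ j ∈ range (n / 2), conj (gt1ω n ^ (j * m)) * gt1ω n ^ (j * m') =
      if m = m' then ((n / 2 : ℕ) : ℂ) else 0 := by
  have hn0 : n ≠ 0 := by omega
  have hω := isPrimitiveRoot_gt1ω hn hn0
  have hterm : ∀ j : ℕ,
      conj (gt1ω n ^ (j * m)) * gt1ω n ^ (j * m') = (gt1ω n ^ ((m' : ℤ) - m)) ^ j := by
    intro j
    rw [conj_gt1ω_pow_mul_gt1ω_pow hn hn0, ← zpow_natCast, ← zpow_mul]
    push_cast; ring_nf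
  simp_rw [hterm]
  split_ifs with h
  · simp [h]
  · refine geom_sum_eq_zero_of_pow_eq_one ?_ ?_
    · rw [Ne, hω.zpow_eq_one_iff_dvd]
      intro hd
      have := Int.eq_zero_of_abs_lt_dvd hd (by rw [abs_lt]; omega)
      omega
    · rw [← zpow_natCast, ← zpow_mul, mul_comm, zpow_mul, zpow_natCast, hω.pow_eq_one, one_zpow]

theorem sum_gt1ω_pow_mul_eq_zero (hn : Even n) {m : ℕ} (hm0 : 0 < m) (hm : m < n / 2) :
    ∑ j ∈ range (n / 2), gt1ω n ^ (j * m) = 0 := by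
  have hω := isPrimitiveRoot_gt1ω hn (by omega)
  simp_rw [mul_comm _ m, pow_mul]
  refine geom_sum_eq_zero_of_pow_eq_one ?_ ?_
  · intro h; exact absurd (Nat.le_of_dvd hm0 ((hω.pow_eq_one_iff_dvd m).1 h)) (by omega)
  · rw [← pow_mul, mul_comm, pow_mul, hω.pow_eq_one, one_pow]

end RootOfUnity

section Windows

variable {n : ℕ}

noncomputable def ketMod (n k : ℕ) : EuclideanSpace ℂ (Fin n) :=
  WithLp.toLp 2 fun a => if (a : ℕ) = k % n then 1 else 0

noncomputable def onesVec (n : ℕ) : EuclideanSpace ℂ (Fin n) :=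
  WithLp.toLp 2 fun _ => 1

noncomputable def fourierWindow (n m k : ℕ) : EuclideanSpace ℂ (Fin n) :=
  ∑ j ∈ range (n / 2), gt1ω n ^ (j * m) • ketMod n (j + k)

theorem fourierWindow_apply (m k : ℕ) (a : Fin n) :
    fourierWindow n m k a =
      ∑ j ∈ range (n / 2), if (a : ℕ) = (j + k) % n then gt1ω n ^ (j * m) else 0 := by
  simp [fourierWindow, ketMod, WithLp.ofLp_sum]

theorem gt1V_eq_tensorVec (m k : ℕ) :
    gt1V n m k = tensorVec (ketMod n k) (fourierWindow n m (k + 1)) := by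
  ext p
  simp [gt1V, tensorVec, ketMod, fourierWindow_apply, add_assoc]

theorem gt1H_eq_tensorVec (m k : ℕ) :
    gt1H n m k = tensorVec (fourierWindow n m k) (ketMod n k) := by
  ext p
  simp [gt1H, tensorVec, ketMod, fourierWindow_apply]

theorem gt1F_eq_tensorVec : gt1F n = tensorVec (onesVec n) (onesVec n) := by
  ext p
  simp [gt1F, tensorVec, onesVec]

theorem inner_ketMod_ketMod (hn : n ≠ 0) (a b : ℕ) :
    inner ℂ (ketMod n a) (ketMod n b) = if a % n = b % n then 1 else 0 := by
  rw [PiLp.inner_apply, Fintype.sum_eq_single ⟨a % n, Nat.mod_lt a (by omega)⟩]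
  · simp [ketMod]
  · intro i hi
    simp [ketMod, Fin.ext_iff.not.1 hi]

theorem inner_ketMod_onesVec (hn : n ≠ 0) (a : ℕ) : inner ℂ (ketMod n a) (onesVec n) = 1 := by
  rw [PiLp.inner_apply, Fintype.sum_eq_single ⟨a % n, Nat.mod_lt a (by omega)⟩]
  · simp [ketMod, onesVec]
  · intro i hi
    simp [ketMod, Fin.ext_iff.not.1 hi]

theorem inner_ketMod_fourierWindow (a m k : ℕ) :
    inner ℂ (ketMod n a) (fourierWindow n m k) =
      ∑ j ∈ range (n / 2), gt1ω n ^ (j * m) * inner ℂ (ketMod n a) (ketMod n (j + k)) := by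
  simp only [fourierWindow, inner_sum, inner_smul_right]

theorem inner_ketMod_fourierWindow_of_lt (hn : n ≠ 0) {j : ℕ} (hj : j < n / 2) (m k : ℕ) :
    inner ℂ (ketMod n (j + k)) (fourierWindow n m k) = gt1ω n ^ (j * m) := by
  rw [inner_ketMod_fourierWindow, sum_eq_single j]
  · rw [inner_ketMod_ketMod hn, if_pos rfl, mul_one]
  · intro i hi hij
    have hcancel : ¬ (j + k) % n = (i + k) % n := fun h =>
      hij (Nat.ModEq.eq_of_lt_of_lt (Nat.ModEq.add_right_cancel' k h).symm
        (by simp at hi; omega) (by omega))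
    simp [inner_ketMod_ketMod hn, hcancel]
  · simp [hj]

theorem inner_ketMod_fourierWindow_eq_zero (hn : n ≠ 0) {a : ℕ} (m k : ℕ)
    (ha : ∀ j < n / 2, a % n ≠ (j + k) % n) : inner ℂ (ketMod n a) (fourierWindow n m k) = 0 := by
  rw [inner_ketMod_fourierWindow]
  exact sum_eq_zero fun j hj => by simp [inner_ketMod_ketMod hn, ha j (mem_range.1 hj)]

theorem inner_fourierWindow_left (m k : ℕ) (v : EuclideanSpace ℂ (Fin n)) :
    inner ℂ (fourierWindow n m k) v =
      ∑ j ∈ range (n / 2), conj (gt1ω n ^ (j * m)) * inner ℂ (ketMod n (j + k)) v := by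
  simp only [fourierWindow, sum_inner, inner_smul_left]

theorem inner_fourierWindow_fourierWindow (hn : Even n) {m m' : ℕ} (hm : m < n / 2)
    (hm' : m' < n / 2) (k : ℕ) :
    inner ℂ (fourierWindow n m k) (fourierWindow n m' k) =
      if m = m' then ((n / 2 : ℕ) : ℂ) else 0 := by
  rw [inner_fourierWindow_left, ← sum_conj_gt1ω_pow_mul_gt1ω_pow hn hm hm']
  exact sum_congr rfl fun j hj => by
    rw [inner_ketMod_fourierWindow_of_lt (by omega) (mem_range.1 hj)]

theorem fourierWindow_ne_zero (hn : Even n) {m : ℕ} (hm : m < n / 2) (k : ℕ) :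
    fourierWindow n m k ≠ 0 := by
  rw [← inner_self_ne_zero (𝕜 := ℂ), inner_fourierWindow_fourierWindow hn hm hm, if_pos rfl]
  exact_mod_cast (by omega : n / 2 ≠ 0)

theorem inner_fourierWindow_onesVec (hn : Even n) {m : ℕ} (hm0 : 0 < m) (hm : m < n / 2) (k : ℕ) :
    inner ℂ (fourierWindow n m k) (onesVec n) = 0 := by
  simp only [inner_fourierWindow_left, inner_ketMod_onesVec (by omega : n ≠ 0), mul_one, ← map_sum,
    sum_gt1ω_pow_mul_eq_zero hn hm0 hm, map_zero]

theorem ketMod_ne_zero (hn : n ≠ 0) (k : ℕ) : ketMod n k ≠ 0 := by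
  rw [← inner_self_ne_zero (𝕜 := ℂ), inner_ketMod_ketMod hn, if_pos rfl]
  exact one_ne_zero

theorem onesVec_ne_zero (hn : n ≠ 0) : onesVec n ≠ 0 := fun h =>
  one_ne_zero (congr_fun (congr_arg WithLp.ofLp h) ⟨0, Nat.pos_of_ne_zero hn⟩)

end Windows

theorem mod_ne_of_mod_eq_of_lt_half {n j j' k k' : ℕ} (hj : j < n / 2) (hj' : j' < n / 2)
    (hk : k % n = (j + k') % n) : k' % n ≠ (j' + (k + 1)) % n := by
  intro hk'
  have hk_cast : (k : ZMod n) = j + k' := by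
    exact_mod_cast (ZMod.natCast_eq_natCast_iff' _ _ n).2 hk
  have hk'_cast : (k' : ZMod n) = j' + (k + 1) := by
    exact_mod_cast (ZMod.natCast_eq_natCast_iff' _ _ n).2 hk'
  have hdvd : n ∣ j + j' + 1 := by
    rw [← ZMod.natCast_eq_zero_iff]
    push_cast
    linear_combination -hk_cast - hk'_cast
  exact absurd (Nat.le_of_dvd (by omega) hdvd) (by omega)

section Tiles

variable {n : ℕ}

theorem inner_gt1V_gt1V (hn : Even n) {m m' k k' : ℕ} (hm : m < n / 2) (hm' : m' < n / 2)
    (hk : k < n) (hk' : k' < n) (hne : (m, k) ≠ (m', k')) :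
    inner ℂ (gt1V n m k) (gt1V n m' k') = 0 := by
  rw [gt1V_eq_tensorVec, gt1V_eq_tensorVec, inner_tensorVec_tensorVec,
    inner_ketMod_ketMod (by omega), Nat.mod_eq_of_lt hk, Nat.mod_eq_of_lt hk']
  rcases eq_or_ne k k' with rfl | hkk
  · rw [if_pos rfl, one_mul, inner_fourierWindow_fourierWindow hn hm hm',
      if_neg (by rintro rfl; exact hne rfl)]
  · rw [if_neg hkk, zero_mul]

theorem inner_gt1H_gt1H (hn : Even n) {m m' k k' : ℕ} (hm : m < n / 2) (hm' : m' < n / 2)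
    (hk : k < n) (hk' : k' < n) (hne : (m, k) ≠ (m', k')) :
    inner ℂ (gt1H n m k) (gt1H n m' k') = 0 := by
  rw [gt1H_eq_tensorVec, gt1H_eq_tensorVec, inner_tensorVec_tensorVec,
    inner_ketMod_ketMod (by omega), Nat.mod_eq_of_lt hk, Nat.mod_eq_of_lt hk']
  rcases eq_or_ne k k' with rfl | hkk
  · rw [if_pos rfl, mul_one, inner_fourierWindow_fourierWindow hn hm hm',
      if_neg (by rintro rfl; exact hne rfl)]
  · rw [if_neg hkk, mul_zero]

theorem inner_gt1V_gt1H (hn : n ≠ 0) (m m' k k' : ℕ) :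
    inner ℂ (gt1V n m k) (gt1H n m' k') = 0 := by
  rw [gt1V_eq_tensorVec, gt1H_eq_tensorVec, inner_tensorVec_tensorVec]
  by_cases h : ∃ j < n / 2, k % n = (j + k') % n
  · obtain ⟨j, hj, hk⟩ := h
    rw [inner_eq_zero_symm.1 (inner_ketMod_fourierWindow_eq_zero hn m (k + 1)
      fun j' hj' => mod_ne_of_mod_eq_of_lt_half hj hj' hk), mul_zero]
  · push Not at h
    rw [inner_ketMod_fourierWindow_eq_zero hn m' k' h, zero_mul]

theorem inner_gt1V_gt1F (hn : Even n) {m : ℕ} (hm0 : 0 < m) (hm : m < n / 2) (k : ℕ) :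
    inner ℂ (gt1V n m k) (gt1F n) = 0 := by
  rw [gt1V_eq_tensorVec, gt1F_eq_tensorVec, inner_tensorVec_tensorVec,
    inner_fourierWindow_onesVec hn hm0 hm, mul_zero]

theorem inner_gt1H_gt1F (hn : Even n) {m : ℕ} (hm0 : 0 < m) (hm : m < n / 2) (k : ℕ) :
    inner ℂ (gt1H n m k) (gt1F n) = 0 := by
  rw [gt1H_eq_tensorVec, gt1F_eq_tensorVec, inner_tensorVec_tensorVec,
    inner_fourierWindow_onesVec hn hm0 hm, zero_mul]

theorem gt1V_ne_zero (hn : Even n) {m : ℕ} (hm : m < n / 2) (k : ℕ) : gt1V n m k ≠ 0 := by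
  rw [gt1V_eq_tensorVec]
  exact tensorVec_ne_zero (ketMod_ne_zero (by omega) k) (fourierWindow_ne_zero hn hm _)

theorem gt1H_ne_zero (hn : Even n) {m : ℕ} (hm : m < n / 2) (k : ℕ) : gt1H n m k ≠ 0 := by
  rw [gt1H_eq_tensorVec]
  exact tensorVec_ne_zero (fourierWindow_ne_zero hn hm _) (ketMod_ne_zero (by omega) k)

theorem gt1F_ne_zero (hn : n ≠ 0) : gt1F n ≠ 0 := by
  rw [gt1F_eq_tensorVec]
  exact tensorVec_ne_zero (onesVec_ne_zero hn) (onesVec_ne_zero hn)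

theorem card_GT1Index (hn : Even n) : Fintype.card (GT1Index n) = n ^ 2 - 2 * n + 1 := by
  obtain ⟨N, rfl⟩ := hn
  simp only [Fintype.card_sum, Fintype.card_prod, Fintype.card_fin, Fintype.card_unit]
  rcases N with _ | M
  · simp
  · rw [show (M + 1 + (M + 1)) / 2 - 1 = M by omega]
    zify [show 2 * (M + 1 + (M + 1)) ≤ (M + 1 + (M + 1)) ^ 2 by nlinarith]
    ring

end Tiles

/-- GenTiles1: for even n ≥ 4 the n² − 2n + 1 states above are (nonzero) mutually
orthogonal product vectors in ℂⁿ ⊗ ℂⁿ. -/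
theorem stmt13 (n : ℕ) (hn4 : 4 ≤ n) (heven : Even n) :
    (∀ s t : GT1Index n, s ≠ t → (inner ℂ (gt1 n s) (gt1 n t) : ℂ) = 0) ∧
    (∀ s, gt1 n s ≠ 0) ∧
    Fintype.card (GT1Index n) = n ^ 2 - 2 * n + 1 := by
  have hn : n ≠ 0 := by omega
  have hm : ∀ m : Fin (n / 2 - 1), (m : ℕ) + 1 < n / 2 := fun m => by omega
  refine ⟨?_, ?_, card_GT1Index heven⟩
  · rintro (⟨m, k⟩ | ⟨m, k⟩ | ⟨⟩) (⟨m', k'⟩ | ⟨m', k'⟩ | ⟨⟩) hne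
    · exact inner_gt1V_gt1V heven (hm m) (hm m') k.isLt k'.isLt
        (by simpa [Fin.val_inj] using hne)
    · exact inner_gt1V_gt1H hn _ _ _ _
    · exact inner_gt1V_gt1F heven (Nat.succ_pos _) (hm m) _
    · exact inner_eq_zero_symm.1 (inner_gt1V_gt1H hn _ _ _ _)
    · exact inner_gt1H_gt1H heven (hm m) (hm m') k.isLt k'.isLt
        (by simpa [Fin.val_inj] using hne)
    · exact inner_gt1H_gt1F heven (Nat.succ_pos _) (hm m) _
    · exact inner_eq_zero_symm.1 (inner_gt1V_gt1F heven (Nat.succ_pos _) (hm m') _)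
    · exact inner_eq_zero_symm.1 (inner_gt1H_gt1F heven (Nat.succ_pos _) (hm m') _)
    · exact absurd rfl hne
  · rintro (⟨m, k⟩ | ⟨m, k⟩ | ⟨⟩)
    · exact gt1V_ne_zero heven (hm m) k
    · exact gt1H_ne_zero heven (hm m) k
    · exact gt1F_ne_zero hn
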